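/- arXiv:2505.10871 — 2 statements merged into one kernel-verified Lean document; each statement's English description precedes it below -/
import Mathlib

section
/- Let N ≥ 0 and ε > 0, and let Z be Laplace-distributed with location N and scale 1/ε. Then the variance of Ñ = max(0, Z) equals (1/ε²)·(2 − exp(−εN)) − (N/ε)·exp(−εN) − (1/(4ε²))·exp(−2εN). -/
/-!
Split the integral of `max 0 z ^ k` against the density at `0` and `N`. On `[0, N]` the density is
`ε/2 · exp (ε (z - N))` and on `[N, ∞)` it is `ε/2 · exp (-ε (z - N))`, so for `k = 1, 2` both pieces
have antiderivatives of the form `exp (±ε (z - N)) · (quadratic in z)`, found by matching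
coefficients; the right one tends to `0` at infinity. This gives
`E[Ñ] = N + exp (-εN) / (2ε)` and `E[Ñ²] = N² + (2 - exp (-εN)) / ε²`, and the variance is
`E[Ñ²] - E[Ñ]²`.
-/

open Real MeasureTheory

/-- The Laplace density with location `N` and scale `1/ε`. -/
noncomputable def laplaceDensity (ε N z : ℝ) : ℝ := ε / 2 * Real.exp (-ε * |z - N|)

open Set Filter Topology

theorem integral_max_zero_pow_mul {k : ℕ} (hk : k ≠ 0) (g : ℝ → ℝ) :
    ∫ z, max 0 z ^ k * g z = ∫ z in Ioi 0, z ^ k * g z := by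
  rw [← integral_indicator measurableSet_Ioi]
  congr 1 with z
  rcases le_or_gt z 0 with h | h
  · simp [h.not_gt, max_eq_left h, zero_pow hk]
  · simp [h, max_eq_right h.le]

theorem hasDerivAt_exp_mul_sub_mul_quadratic (a x₀ b c d x : ℝ) :
    HasDerivAt (fun x => exp (a * (x - x₀)) * (b + c * x + d * x ^ 2))
      (exp (a * (x - x₀)) * ((a * b + c) + (a * c + 2 * d) * x + a * d * x ^ 2)) x := by
  have hexp : HasDerivAt (fun x => exp (a * (x - x₀))) (exp (a * (x - x₀)) * (a * 1)) x :=
    (((hasDerivAt_id x).sub_const x₀).const_mul a).exp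
  have hpoly : HasDerivAt (fun x => b + c * x + d * x ^ 2) (c * 1 + d * (2 * x ^ 1)) x :=
    (((hasDerivAt_id x).const_mul c).const_add b).add ((hasDerivAt_pow 2 x).const_mul d)
  exact (hexp.mul hpoly).congr_deriv (by ring)

theorem tendsto_exp_neg_mul_sub_mul_quadratic_atTop {ε : ℝ} (hε : 0 < ε) (x₀ b c d : ℝ) :
    Tendsto (fun x => exp (-ε * (x - x₀)) * (b + c * x + d * x ^ 2)) atTop (𝓝 0) := by
  have h (n : ℕ) : Tendsto (fun x : ℝ => x ^ n * exp (-ε * x)) atTop (𝓝 0) := by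
    simpa using tendsto_rpow_mul_exp_neg_mul_atTop_nhds_zero n ε hε
  have h' := ((((h 0).const_mul b).add ((h 1).const_mul c)).add ((h 2).const_mul d)).const_mul
    (exp (ε * x₀))
  simp only [mul_zero, add_zero] at h'
  refine h'.congr fun x => ?_
  rw [show -ε * (x - x₀) = ε * x₀ + -ε * x by ring, exp_add]
  ring

section Laplace

variable {ε N z : ℝ}

theorem laplaceDensity_of_le (h : z ≤ N) : laplaceDensity ε N z = ε / 2 * exp (ε * (z - N)) := by
  rw [laplaceDensity, abs_of_nonpos (sub_nonpos.2 h), neg_mul_neg]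

theorem laplaceDensity_of_ge (h : N ≤ z) :
    laplaceDensity ε N z = ε / 2 * exp (-ε * (z - N)) := by
  rw [laplaceDensity, abs_of_nonneg (sub_nonneg.2 h)]

@[fun_prop]
theorem continuous_laplaceDensity (ε N : ℝ) : Continuous (laplaceDensity ε N) := by
  unfold laplaceDensity
  fun_prop

theorem integral_max_zero_pow_mul_laplaceDensity (hε : 0 < ε) (hN : 0 ≤ N) {k : ℕ} (hk : k ≠ 0)
    {F G : ℝ → ℝ} {L : ℝ} (hF : ∀ x, HasDerivAt F (x ^ k * (ε / 2 * exp (ε * (x - N)))) x)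
    (hG : ∀ x, HasDerivAt G (x ^ k * (ε / 2 * exp (-ε * (x - N)))) x)
    (hGL : Tendsto G atTop (𝓝 L)) :
    ∫ z, max 0 z ^ k * laplaceDensity ε N z = F N - F 0 + (L - G N) := by
  have hG_nonneg : ∀ x ∈ Ioi N, 0 ≤ x ^ k * (ε / 2 * exp (-ε * (x - N))) := fun x hx => by
    have : 0 ≤ x := hN.trans hx.out.le
    positivity
  have hleft : EqOn (fun z => z ^ k * laplaceDensity ε N z)
      (fun z => z ^ k * (ε / 2 * exp (ε * (z - N)))) (Ioc 0 N) := fun z hz => by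
    simp only [laplaceDensity_of_le hz.2]
  have hright : EqOn (fun z => z ^ k * laplaceDensity ε N z)
      (fun z => z ^ k * (ε / 2 * exp (-ε * (z - N)))) (Ioi N) := fun z hz => by
    simp only [laplaceDensity_of_ge hz.out.le]
  have hright_int : IntegrableOn (fun z => z ^ k * laplaceDensity ε N z) (Ioi N) :=
    (integrableOn_Ioi_deriv_of_nonneg' (fun x _ => hG x) hG_nonneg hGL).congr_fun hright.symm
      measurableSet_Ioi
  rw [integral_max_zero_pow_mul hk, ← Ioc_union_Ioi_eq_Ioi hN,
    setIntegral_union (Ioc_disjoint_Ioi le_rfl) measurableSet_Ioi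
      (Continuous.integrableOn_Ioc (by fun_prop)) hright_int,
    setIntegral_congr_fun measurableSet_Ioc hleft, setIntegral_congr_fun measurableSet_Ioi hright,
    ← intervalIntegral.integral_of_le hN,
    intervalIntegral.integral_eq_sub_of_hasDerivAt (fun x _ => hF x)
      (Continuous.intervalIntegrable (by fun_prop) _ _),
    integral_Ioi_of_hasDerivAt_of_nonneg' (fun x _ => hG x) hG_nonneg hGL]

theorem integral_max_zero_mul_laplaceDensity (hε : 0 < ε) (hN : 0 ≤ N) :
    ∫ z, max 0 z * laplaceDensity ε N z = N + exp (-ε * N) / (2 * ε) := by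
  have h := integral_max_zero_pow_mul_laplaceDensity hε hN one_ne_zero
    (F := fun x => exp (ε * (x - N)) * (-1 / (2 * ε) + 1 / 2 * x + 0 * x ^ 2))
    (G := fun x => exp (-ε * (x - N)) * (-1 / (2 * ε) + -1 / 2 * x + 0 * x ^ 2))
    (fun x => (hasDerivAt_exp_mul_sub_mul_quadratic _ _ _ _ _ x).congr_deriv
      (by field_simp; ring))
    (fun x => (hasDerivAt_exp_mul_sub_mul_quadratic _ _ _ _ _ x).congr_deriv
      (by field_simp; ring))
    (tendsto_exp_neg_mul_sub_mul_quadratic_atTop hε _ _ _ _)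
  simp only [pow_one] at h
  rw [h]
  simp only [sub_self, mul_zero, exp_zero, zero_sub]
  field_simp
  ring

theorem integral_max_zero_sq_mul_laplaceDensity (hε : 0 < ε) (hN : 0 ≤ N) :
    ∫ z, max 0 z ^ 2 * laplaceDensity ε N z = N ^ 2 + (2 - exp (-ε * N)) / ε ^ 2 := by
  rw [integral_max_zero_pow_mul_laplaceDensity hε hN two_ne_zero
    (F := fun x => exp (ε * (x - N)) * (1 / ε ^ 2 + -1 / ε * x + 1 / 2 * x ^ 2))
    (G := fun x => exp (-ε * (x - N)) * (-1 / ε ^ 2 + -1 / ε * x + -1 / 2 * x ^ 2))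
    (fun x => (hasDerivAt_exp_mul_sub_mul_quadratic _ _ _ _ _ x).congr_deriv
      (by field_simp; ring))
    (fun x => (hasDerivAt_exp_mul_sub_mul_quadratic _ _ _ _ _ x).congr_deriv
      (by field_simp; ring))
    (tendsto_exp_neg_mul_sub_mul_quadratic_atTop hε _ _ _ _)]
  simp only [sub_self, mul_zero, exp_zero, zero_sub]
  field_simp
  ring

end Laplace

theorem variance_truncated_laplace (N ε : ℝ) (hN : 0 ≤ N) (hε : 0 < ε) :
    (∫ z : ℝ, (max 0 z) ^ 2 * laplaceDensity ε N z)
      - (∫ z : ℝ, max 0 z * laplaceDensity ε N z) ^ 2 =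
      1 / ε ^ 2 * (2 - Real.exp (-ε * N)) - N / ε * Real.exp (-ε * N)
        - 1 / (4 * ε ^ 2) * Real.exp (-2 * ε * N) := by
  rw [integral_max_zero_sq_mul_laplaceDensity hε hN, integral_max_zero_mul_laplaceDensity hε hN,
    show -2 * ε * N = -ε * N + -ε * N by ring, exp_add]
  field_simp
  ring
end

section
/- Let N ≥ 0 and ε > 0, and let Z be Laplace-distributed with location N and scale 1/ε. Then the mean squared error E[(max(0,Z) − N)²] equals (1/ε²)·(2 − exp(−εN)) − (N/ε)·exp(−εN). -/
open Real MeasureTheory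

/-!
In the centred variable `u = z - N` the integrand is `N² (ε/2) e^{εu}` for `u ≤ -N` (where the
truncation at `0` is active), `u² (ε/2) e^{εu}` on `(-N, 0]` and `u² (ε/2) e^{-εu}` for `u > 0`.
Each piece integrates in closed form, the last two through the primitive
`e^{cu} (u²/c - 2u/c² + 2/c³)` of `u² e^{cu}`.
-/

open Set Filter Topology

theorem integral_eq_Iic_add_Ioc_add_Ioi {E : Type*} [NormedAddCommGroup E] [NormedSpace ℝ E]
    {μ : Measure ℝ} {f : ℝ → E} {a b : ℝ} (hab : a ≤ b) (h₁ : IntegrableOn f (Iic a) μ)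
    (h₂ : IntegrableOn f (Ioc a b) μ) (h₃ : IntegrableOn f (Ioi b) μ) :
    ∫ x, f x ∂μ = (∫ x in Iic a, f x ∂μ) + (∫ x in Ioc a b, f x ∂μ) + ∫ x in Ioi b, f x ∂μ := by
  rw [add_assoc, ← setIntegral_union (Ioc_disjoint_Ioi le_rfl) measurableSet_Ioi h₂ h₃,
    Ioc_union_Ioi_eq_Ioi hab, intervalIntegral.integral_Iic_add_Ioi h₁]
  rw [← Ioc_union_Ioi_eq_Ioi hab]
  exact h₂.union h₃

noncomputable def sqMulExpPrimitive (c u : ℝ) : ℝ :=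
  exp (c * u) * (u ^ 2 / c - 2 * u / c ^ 2 + 2 / c ^ 3)

theorem hasDerivAt_sqMulExpPrimitive {c : ℝ} (hc : c ≠ 0) (u : ℝ) :
    HasDerivAt (sqMulExpPrimitive c) (u ^ 2 * exp (c * u)) u := by
  have hexp : HasDerivAt (fun u => exp (c * u)) (exp (c * u) * c) u := by
    simpa using ((hasDerivAt_id u).const_mul c).exp
  have hpoly : HasDerivAt (fun u : ℝ => u ^ 2 / c - 2 * u / c ^ 2 + 2 / c ^ 3)
      (2 * u / c - 2 / c ^ 2) u := by
    refine ((((hasDerivAt_pow 2 u).div_const c).sub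
      (((hasDerivAt_id u).const_mul 2).div_const (c ^ 2))).add_const (2 / c ^ 3)).congr_deriv ?_
    simp
  refine (hexp.mul hpoly).congr_deriv ?_
  field_simp
  ring

theorem tendsto_sqMulExpPrimitive_atTop {c : ℝ} (hc : c < 0) :
    Tendsto (sqMulExpPrimitive c) atTop (𝓝 0) := by
  have hdecay (k : ℕ) : Tendsto (fun u : ℝ => u ^ k * exp (c * u)) atTop (𝓝 0) := by
    simpa [Real.rpow_natCast, neg_mul] using
      tendsto_rpow_mul_exp_neg_mul_atTop_nhds_zero k (-c) (neg_pos.2 hc)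
  convert (((hdecay 2).div_const c).sub (((hdecay 1).const_mul 2).div_const (c ^ 2))).add
    ((hdecay 0).const_mul (2 / c ^ 3)) using 1
  · ext u; simp only [sqMulExpPrimitive]; ring
  · simp

theorem integrableOn_Ioi_sq_mul_exp_mul {c : ℝ} (hc : c < 0) (a : ℝ) :
    IntegrableOn (fun u => u ^ 2 * exp (c * u)) (Ioi a) :=
  integrableOn_Ioi_deriv_of_nonneg' (fun u _ => hasDerivAt_sqMulExpPrimitive hc.ne u)
    (fun u _ => by positivity) (tendsto_sqMulExpPrimitive_atTop hc)

theorem integral_Ioi_sq_mul_exp_mul {c : ℝ} (hc : c < 0) (a : ℝ) :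
    ∫ u in Ioi a, u ^ 2 * exp (c * u) = -sqMulExpPrimitive c a := by
  rw [integral_Ioi_of_hasDerivAt_of_nonneg' (fun u _ => hasDerivAt_sqMulExpPrimitive hc.ne u)
    (fun u _ => by positivity) (tendsto_sqMulExpPrimitive_atTop hc), zero_sub]

theorem integral_sq_mul_exp_mul {c : ℝ} (hc : c ≠ 0) (a b : ℝ) :
    ∫ u in a..b, u ^ 2 * exp (c * u) = sqMulExpPrimitive c b - sqMulExpPrimitive c a :=
  intervalIntegral.integral_eq_sub_of_hasDerivAt (fun u _ => hasDerivAt_sqMulExpPrimitive hc u)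
    ((by fun_prop : Continuous fun u : ℝ => u ^ 2 * exp (c * u)).intervalIntegrable _ _)

noncomputable def centredErrorIntegrand (ε N u : ℝ) : ℝ :=
  (max 0 (u + N) - N) ^ 2 * laplaceDensity ε N (u + N)

section CentredErrorIntegrand

variable {ε N : ℝ}

theorem centredErrorIntegrand_eqOn_Iic (hN : 0 ≤ N) :
    EqOn (centredErrorIntegrand ε N) (fun u => N ^ 2 * (ε / 2) * exp (ε * u)) (Iic (-N)) :=
  fun u (hu : u ≤ -N) => by
    simp only [centredErrorIntegrand, laplaceDensity, add_sub_cancel_right,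
      max_eq_left (by linarith : u + N ≤ 0), abs_of_nonpos (by linarith : u ≤ 0)]
    ring_nf

theorem centredErrorIntegrand_eqOn_Ioc :
    EqOn (centredErrorIntegrand ε N) (fun u => ε / 2 * (u ^ 2 * exp (ε * u))) (Ioc (-N) 0) :=
  fun u hu => by
    simp only [centredErrorIntegrand, laplaceDensity, add_sub_cancel_right,
      max_eq_right (by linarith [hu.1] : 0 ≤ u + N), abs_of_nonpos hu.2]
    ring_nf

theorem centredErrorIntegrand_eqOn_Ioi (hN : 0 ≤ N) :
    EqOn (centredErrorIntegrand ε N) (fun u => ε / 2 * (u ^ 2 * exp (-ε * u))) (Ioi 0) :=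
  fun u (hu : 0 < u) => by
    simp only [centredErrorIntegrand, laplaceDensity, add_sub_cancel_right,
      max_eq_right (by linarith : 0 ≤ u + N), abs_of_pos hu]
    ring_nf

theorem integral_centredErrorIntegrand (hN : 0 ≤ N) (hε : 0 < ε) :
    ∫ u, centredErrorIntegrand ε N u =
      N ^ 2 * (ε / 2) * (exp (ε * -N) / ε) +
        ε / 2 * (sqMulExpPrimitive ε 0 - sqMulExpPrimitive ε (-N)) +
          ε / 2 * -sqMulExpPrimitive (-ε) 0 := by
  have hleft := centredErrorIntegrand_eqOn_Iic (ε := ε) hN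
  have hmid := centredErrorIntegrand_eqOn_Ioc (ε := ε) (N := N)
  have hright := centredErrorIntegrand_eqOn_Ioi (ε := ε) hN
  have hneg : -ε < 0 := neg_neg_of_pos hε
  rw [integral_eq_Iic_add_Ioc_add_Ioi (neg_nonpos.2 hN)
      (IntegrableOn.congr_fun ((integrableOn_exp_mul_Iic hε _).const_mul _) hleft.symm
        measurableSet_Iic)
      (IntegrableOn.congr_fun (Continuous.integrableOn_Ioc (by fun_prop)) hmid.symm
        measurableSet_Ioc)
      (IntegrableOn.congr_fun ((integrableOn_Ioi_sq_mul_exp_mul hneg _).const_mul _)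
        hright.symm measurableSet_Ioi),
    setIntegral_congr_fun measurableSet_Iic hleft, setIntegral_congr_fun measurableSet_Ioc hmid,
    setIntegral_congr_fun measurableSet_Ioi hright, integral_const_mul, integral_const_mul,
    integral_const_mul, integral_exp_mul_Iic hε, ← intervalIntegral.integral_of_le (neg_nonpos.2 hN),
    integral_sq_mul_exp_mul hε.ne', integral_Ioi_sq_mul_exp_mul hneg]

end CentredErrorIntegrand

theorem mse_truncated_laplace (N ε : ℝ) (hN : 0 ≤ N) (hε : 0 < ε) :
    (∫ z : ℝ, (max 0 z - N) ^ 2 * laplaceDensity ε N z) =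
      1 / ε ^ 2 * (2 - Real.exp (-ε * N)) - N / ε * Real.exp (-ε * N) := by
  rw [← integral_add_right_eq_self _ N]
  change ∫ u, centredErrorIntegrand ε N u = _
  rw [integral_centredErrorIntegrand hN hε]
  simp only [sqMulExpPrimitive, mul_zero, exp_zero]
  field_simp
  ring
end
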